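/- Let K = K_1 × ⋯ × K_m be an étale ℚ-algebra and R a sieve over K such that there exists a finite set T ⊆ O_K with R_i ⊆ T + 𝔟_i for every i. If ∑_{i≥1} 1/N(𝔟_i) < ∞, then R is Erdős and has strong light tails for the Følner sequence (B_N). In particular, every Erdős B-free system over an étale ℚ-algebra (the case R_i = 𝔟_i with ∑_i 1/N(𝔟_i) < ∞) has strong light tails for (B_N). -/

import Mathlib

open Filter Topology MeasureTheory Pointwise symmDiff

noncomputable section

namespace ErdosSieve

variable {O : Type} [CommRing O]

/-- A sieve over (the ring of integers of) an étale `ℚ`-algebra: a sequence of pairwise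
coprime invertible (i.e. finite-quotient) ideals `b i` together with, for each `i`, a finite
set `gen i` of representatives, so that the sieved-out set is `R_i = gen i + b i`, which is
required to be a proper subset of the ring. -/
structure Sieve (O : Type) [CommRing O] : Type where
  b : ℕ → Ideal O
  gen : ℕ → Finset O
  coprime : ∀ i j, i ≠ j → b i ⊔ b j = ⊤
  finQuot : ∀ i, Finite (O ⧸ b i)
  ne_univ : ∀ i, (↑(gen i) : Set O) + (↑(b i) : Set O) ≠ Set.univ

/-- The `i`-th sieved-out set `R_i = gen i + b i`. -/
def Sieve.RSet (S : Sieve O) (i : ℕ) : Set O := (↑(S.gen i) : Set O) + (↑(S.b i) : Set O)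

/-- The set `F_R` of `R`-free numbers. -/
def Sieve.FR (S : Sieve O) : Set O := (⋃ i, S.RSet i)ᶜ

/-- The norm `N(b i)` of the `i`-th ideal. -/
def Sieve.normb (S : Sieve O) (i : ℕ) : ℕ := Nat.card (O ⧸ S.b i)

/-- The number `|R_i|` of residue classes modulo `b i` met by `R_i`. -/
def Sieve.cardR (S : Sieve O) (i : ℕ) : ℕ :=
  Nat.card ((Ideal.Quotient.mk (S.b i)) '' (S.RSet i))

/-- A sieve is Erdős if `∑ |R_i| / N(b_i) < ∞`. -/
def Sieve.IsErdos (S : Sieve O) : Prop :=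
  Summable fun i => (S.cardR i : ℝ) / (S.normb i : ℝ)

/-- A Følner sequence: finite nonempty subsets of `O` which are asymptotically
translation-invariant. -/
def IsFolner (I : ℕ → Set O) : Prop :=
  (∀ N, (I N).Finite) ∧ (∀ N, (I N).Nonempty) ∧
    ∀ x : O, Tendsto
      (fun N => (Nat.card ↥(((x + ·) '' I N) ∆ (I N)) : ℝ) / (Nat.card ↥(I N) : ℝ))
      atTop (𝓝 0)

/-- Upper density along a (Følner) sequence. -/
def upperDensity (I : ℕ → Set O) (A : Set O) : ℝ :=
  limsup (fun N => (Nat.card ↥(A ∩ I N) : ℝ) / (Nat.card ↥(I N) : ℝ)) atTop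

/-- `A` has density `d` along the sequence `I`. -/
def HasDensity (I : ℕ → Set O) (A : Set O) (d : ℝ) : Prop :=
  Tendsto (fun N => (Nat.card ↥(A ∩ I N) : ℝ) / (Nat.card ↥(I N) : ℝ)) atTop (𝓝 d)

/-- `⋃_{i ≥ L} R i`. -/
def unionGe (R : ℕ → Set O) (L : ℕ) : Set O := ⋃ i, ⋃ (_ : L ≤ i), R i

/-- `⋃_{i < L} R i`. -/
def unionLt (R : ℕ → Set O) (L : ℕ) : Set O := ⋃ i, ⋃ (_ : i < L), R i

/-- The weak light tails property for a family of sieved-out sets: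
`limsup`-density of `⋃_{i ≥ L} R_i ∖ ⋃_{j < L} R_j` tends to `0` as `L → ∞`. -/
def WeakLightTailsFam (I : ℕ → Set O) (R : ℕ → Set O) : Prop :=
  Tendsto (fun L => upperDensity I (unionGe R L \ unionLt R L)) atTop (𝓝 0)

/-- The strong light tails property for a family of sieved-out sets. -/
def StrongLightTailsFam (I : ℕ → Set O) (R : ℕ → Set O) : Prop :=
  Tendsto (fun L => upperDensity I (unionGe R L)) atTop (𝓝 0)

/-- A sieve has weak light tails for `I` if it is Erdős and the tail differences have
vanishing upper density. -/
def Sieve.HasWeakLightTails (S : Sieve O) (I : ℕ → Set O) : Prop :=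
  S.IsErdos ∧ WeakLightTailsFam I S.RSet

/-- A sieve has strong light tails for `I` if it is Erdős and the tails have vanishing
upper density. -/
def Sieve.HasStrongLightTails (S : Sieve O) (I : ℕ → Set O) : Prop :=
  S.IsErdos ∧ StrongLightTailsFam I S.RSet

/-- The infinite product `∏_i (1 - |R_i|/N(b_i))`, realized as the infimum of the
(nonincreasing) sequence of partial products, i.e. as its limit. -/
def Sieve.prodDensity (S : Sieve O) : ℝ :=
  ⨅ L : ℕ, ∏ i ∈ Finset.range L, (1 - (S.cardR i : ℝ) / (S.normb i : ℝ))

/-- `A` is an `R`-admissible set: `-A + R_i ≠ O` for all `i`. -/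
def Sieve.Admissible (S : Sieve O) (A : Set O) : Prop :=
  ∀ i, -A + S.RSet i ≠ Set.univ

/-- The number `|-A + R_i|` of residue classes modulo `b i` met by `-A + R_i`. -/
def Sieve.cardShift (S : Sieve O) (A : Set O) (i : ℕ) : ℕ :=
  Nat.card ((Ideal.Quotient.mk (S.b i)) '' (-A + S.RSet i))

/-- The infinite product `∏_i (1 - |-A + R_i|/N(b_i))` (as the infimum of the
partial products). -/
def Sieve.prodDensityShift (S : Sieve O) (A : Set O) : ℝ :=
  ⨅ L : ℕ, ∏ i ∈ Finset.range L, (1 - (S.cardShift A i : ℝ) / (S.normb i : ℝ))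

/-- A subset `Y` of `O` is syndetic if finitely many translates of it cover `O`. -/
def Syndetic (Y : Set O) : Prop := ∃ C : Finset O, Y + (↑C : Set O) = Set.univ

-- Indicator of a subset of `O`, i.e. a point of the shift space `{0,1}^O`.
open Classical in
def chiSet (A : Set O) : O → Bool := fun x => if x ∈ A then true else false

/-- The shift action `S_a(A) = A - a` on `{0,1}^O`: `χ_{A - a}(x) = χ_A (x + a)`. -/
def shiftB (a : O) (f : O → Bool) : O → Bool := fun x => f (x + a)

/-- The odometer group `G_R = ∏ i, O ⧸ b i`. -/
abbrev Sieve.GR (S : Sieve O) : Type := ∀ i : ℕ, O ⧸ S.b i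

-- The map `φ_R : G_R → {0,1}^O`: `a ∈ φ_R(g)` iff `a + g i` avoids (the image of) `R_i`
-- modulo `b i` for every `i`.
open Classical in
def Sieve.phiB (S : Sieve O) (g : S.GR) : O → Bool := fun a =>
  if (∀ i, (Ideal.Quotient.mk (S.b i) a + g i) ∉ (Ideal.Quotient.mk (S.b i)) '' (S.RSet i))
  then true else false

/-- The Mirsky measure `ν_R` on `{0,1}^O`: the pushforward under `φ_R` of the Haar
probability measure of the compact group `G_R` (each factor being finite and discrete,
and the Haar measure being normalized so that the whole group has measure `1`). -/
def Sieve.mirsky (S : Sieve O) : Measure (O → Bool) := by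
  letI : ∀ i, TopologicalSpace (O ⧸ S.b i) := fun _ => ⊥
  haveI : ∀ i, DiscreteTopology (O ⧸ S.b i) := fun _ => ⟨rfl⟩
  haveI : ∀ i, Finite (O ⧸ S.b i) := S.finQuot
  haveI : ∀ i, IsTopologicalAddGroup (O ⧸ S.b i) := fun i => { }
  letI : MeasurableSpace S.GR := borel _
  haveI : BorelSpace S.GR := ⟨rfl⟩
  exact Measure.map S.phiB (Measure.addHaarMeasure (G := S.GR) ⊤)

/-- The ring of integers of the étale `ℚ`-algebra `K 0 × ⋯ × K (m-1)`. -/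
abbrev OK {m : ℕ} (K : Fin m → Type) [∀ j, Field (K j)] [∀ j, NumberField (K j)] : Type :=
  ∀ j, NumberField.RingOfIntegers (K j)

variable {m : ℕ} (K : Fin m → Type) [∀ j, Field (K j)] [∀ j, NumberField (K j)]

/-- The "ball" `B_N` in `O_K`: elements all of whose archimedean embeddings have absolute
value at most `N` (the max over embeddings of all the number-field components). -/
def ball (N : ℕ) : Set (OK K) :=
  {x | ∀ j, ∀ φ : K j →+* ℂ,
    ‖φ (algebraMap (NumberField.RingOfIntegers (K j)) (K j) (x j))‖ ≤ N}

/-!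
Modulo `𝔟_i` the set `R_i` meets at most `|T|` classes, so the sieve is Erdős, and `⋃_{i ≥ L} R_i`
is covered by the cosets `t + 𝔟_i`, `t ∈ T`, `i ≥ L`. Write `O_K = ∏ O_{K_j}`, `B_N = ∏ B_N^{(j)}`
and `𝔟 = ∏ 𝔟_j`. The points of `B_N` with a coordinate `x_j = t_j` have density
`O(∑_j 1 / |B_N^{(j)}|) → 0`; the other points of `(t + 𝔟) ∩ B_N` lie in the box
`∏_j ((t_j + 𝔟_j) ∩ B_N^{(j)} ∖ {t_j})`. Nonzero elements of `𝔟_j` have house at least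
`N(𝔟_j)^{1/d_j}`, so a nonempty factor forces `N(𝔟_j)^{1/d_j} ≤ 2N`, and a lattice-packing count
then bounds it by `C_j |B_N^{(j)}| / N(𝔟_j)`. Multiplying, the upper density of `⋃_{i ≥ L} R_i`
is at most `C |T| ∑_{i ≥ L} 1 / N(𝔟_i)`, which tends to `0`.
-/

open NumberField Module

section Counting

theorem ncard_univ_pi {ι : Type*} [Fintype ι] {α : ι → Type*} (s : ∀ i, Set (α i)) :
    (Set.univ.pi s).ncard = ∏ i, (s i).ncard := by
  rw [← Nat.card_coe_set_eq, Nat.card_congr (Equiv.Set.univPi s), Nat.card_pi]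
  rfl

theorem ncard_univ_pi_inter_eval_eq_mul_le {ι : Type*} [Fintype ι] [DecidableEq ι]
    {α : ι → Type*} {s : ∀ i, Set (α i)} (hs : ∀ i, (s i).Finite) (j : ι) (a : α j) :
    (Set.univ.pi s ∩ {x | x j = a}).ncard * (s j).ncard ≤ (Set.univ.pi s).ncard := by
  calc _ ≤ (Set.univ.pi (Function.update s j {a})).ncard * (s j).ncard := by
        gcongr
        · exact Set.Finite.pi fun k => by
            rcases eq_or_ne k j with rfl | hk <;> simp [*]
        · rintro x ⟨hx, rfl⟩ k -
          rcases eq_or_ne k j with rfl | hk <;> simp [*, hx k (Set.mem_univ k)]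
    _ = _ := by
        rw [ncard_univ_pi, ncard_univ_pi, ← Finset.prod_erase_mul _ _ (Finset.mem_univ j),
          ← Finset.prod_erase_mul _ _ (Finset.mem_univ j), Function.update_self,
          Set.ncard_singleton, mul_one]
        congr 1
        exact Finset.prod_congr rfl fun k hk => by
          rw [Function.update_of_ne (Finset.ne_of_mem_erase hk)]

theorem ncard_iUnion_le_tsum {α : Type*} {s : ℕ → Set α} (hs : (⋃ i, s i).Finite) {g : ℕ → ℝ}
    (hg : Summable g) (hsg : ∀ i, ((s i).ncard : ℝ) ≤ g i) :
    ((⋃ i, s i).ncard : ℝ) ≤ ∑' i, g i := by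
  classical
  obtain ⟨J, hJ⟩ : ∃ J : Finset ℕ, ⋃ i, s i ⊆ ⋃ i ∈ J, s i := by
    have := hs.fintype
    choose f hf using fun x : ↥(⋃ i, s i) => Set.mem_iUnion.1 x.2
    exact ⟨Finset.univ.image f, fun x hx =>
      Set.mem_biUnion (Finset.mem_image_of_mem f (Finset.mem_univ ⟨x, hx⟩)) (hf ⟨x, hx⟩)⟩
  calc ((⋃ i, s i).ncard : ℝ) ≤ ((⋃ i ∈ J, s i).ncard : ℝ) := by
        exact_mod_cast Set.ncard_le_ncard hJ (hs.subset (Set.iUnion₂_subset_iUnion _ _))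
    _ ≤ ∑ i ∈ J, ((s i).ncard : ℝ) := by exact_mod_cast J.set_ncard_biUnion_le s
    _ ≤ ∑ i ∈ J, g i := Finset.sum_le_sum fun i _ => hsg i
    _ ≤ ∑' i, g i := hg.sum_le_tsum J fun i _ => (Nat.cast_nonneg _).trans (hsg i)

theorem ncard_le_of_norm_le_of_pairwise_le_norm_sub {ι : Type*} [Fintype ι]
    {P : Set (ι → ℤ)} {R s : ℝ} (hR : 0 ≤ R) (hs : 0 < s) (hPR : ∀ v ∈ P, ‖v‖ ≤ R)
    (hP : P.Pairwise fun v w => s ≤ ‖v - w‖) :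
    (P.ncard : ℝ) ≤ (2 * R / s + 2) ^ Fintype.card ι := by
  classical
  set cell : (ι → ℤ) → ι → ℤ := fun v k => ⌊(v k : ℝ) / s⌋
  have hinj : P.InjOn cell := by
    refine fun v hv w hw hvw => by_contra fun hne => (hP hv hw hne).not_gt ?_
    refine (pi_norm_lt_iff hs).2 fun k => ?_
    have := Int.abs_sub_lt_one_of_floor_eq_floor (congrFun hvw k)
    rwa [← sub_div, abs_div, abs_of_pos hs, div_lt_one hs, ← Int.cast_sub,
      ← Int.norm_eq_abs] at this
  have hmaps : Set.MapsTo cell P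
      (Fintype.piFinset fun _ : ι => Finset.Icc ⌊-R / s⌋ ⌊R / s⌋ : Set (ι → ℤ)) := by
    intro v hv
    simp only [Fintype.coe_piFinset, Set.mem_pi, Set.mem_univ, Finset.coe_Icc, Set.mem_Icc,
      forall_const]
    intro k
    have hk := abs_le.1 ((Int.norm_eq_abs _).symm.trans_le
      ((norm_le_pi_norm v k).trans (hPR v hv)))
    exact ⟨Int.floor_le_floor (by gcongr; exact hk.1), Int.floor_le_floor (by gcongr; exact hk.2)⟩
  have hcard := Set.ncard_le_ncard_of_injOn cell hmaps hinj
  rw [Set.ncard_coe_finset, Fintype.card_piFinset, Finset.prod_const, Finset.card_univ,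
    Int.card_Icc] at hcard
  have hwidth : (((⌊R / s⌋ + 1 - ⌊-R / s⌋).toNat : ℕ) : ℝ) ≤ 2 * R / s + 2 := by
    have hle : ⌊-R / s⌋ ≤ ⌊R / s⌋ := Int.floor_le_floor (by gcongr; linarith)
    have hcast : (((⌊R / s⌋ + 1 - ⌊-R / s⌋).toNat : ℕ) : ℝ) = ⌊R / s⌋ + 1 - ⌊-R / s⌋ := by
      exact_mod_cast Int.toNat_of_nonneg (by omega)
    rw [hcast]
    linarith [Int.floor_le (R / s), Int.sub_one_lt_floor (-R / s), neg_div s R,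
      mul_div_assoc 2 R s]
  calc (P.ncard : ℝ) ≤ (((⌊R / s⌋ + 1 - ⌊-R / s⌋).toNat ^ Fintype.card ι : ℕ) : ℝ) := by
        exact_mod_cast hcard
    _ ≤ _ := by push_cast; gcongr

theorem natCard_quotient_pi {ι : Type*} [Fintype ι] {R : ι → Type*} [∀ i, CommRing (R i)]
    (I : ∀ i, Ideal (R i)) : Nat.card ((∀ i, R i) ⧸ Ideal.pi I) = ∏ i, Nat.card (R i ⧸ I i) := by
  let f : (∀ i, R i) →+* ∀ i, R i ⧸ I i :=
    RingHom.pi fun i => (Ideal.Quotient.mk (I i)).comp (Pi.evalRingHom R i)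
  have hf : Function.Surjective f := fun y =>
    ⟨fun i => (Ideal.Quotient.mk_surjective (y i)).choose,
      funext fun i => (Ideal.Quotient.mk_surjective (y i)).choose_spec⟩
  have hker : RingHom.ker f = Ideal.pi I := by
    ext x
    simp [f, RingHom.mem_ker, funext_iff, RingHom.pi_apply, Ideal.Quotient.eq_zero_iff_mem,
      Ideal.mem_pi]
  rw [← Nat.card_pi, ← hker]
  exact Nat.card_congr (RingHom.quotientKerEquivOfSurjective hf).toEquiv

end Counting

section NumberFieldGeometry

variable {F : Type*} [Field F] [NumberField F]

theorem house_le_iff_forall_norm_le {x : F} {r : ℝ} (hr : 0 ≤ r) :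
    house x ≤ r ↔ ∀ φ : F →+* ℂ, ‖φ x‖ ≤ r :=
  pi_norm_le_iff_of_nonneg hr

theorem house_sub_le (x y : F) : house (x - y) ≤ house x + house y := by
  simpa [house, sub_eq_add_neg] using house_add_le x (-y)

variable (F) in
def houseBall (r : ℝ) : Set (𝓞 F) := {x | house (x : F) ≤ r}

theorem zero_mem_houseBall {r : ℝ} (hr : 0 ≤ r) : 0 ∈ houseBall F r := by
  simpa [houseBall, house] using hr

theorem finite_houseBall (r : ℝ) : (houseBall F r).Finite := by
  refine ((Embeddings.finite_of_norm_le F ℂ r).preimage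
    RingOfIntegers.coe_injective.injOn).subset fun x hx => ?_
  exact ⟨x.isIntegral_coe, fun φ => (norm_embedding_le_house _ φ).trans hx⟩

variable (F) in
def integralCoords : 𝓞 F ≃ₗ[ℤ] (Free.ChooseBasisIndex ℤ (𝓞 F) → ℤ) :=
  (RingOfIntegers.basis F).equivFun

theorem card_chooseBasisIndex_eq_finrank :
    Fintype.card (Free.ChooseBasisIndex ℤ (𝓞 F)) = finrank ℚ F :=
  (finrank_eq_card_chooseBasisIndex ℤ (𝓞 F)).symm.trans (RingOfIntegers.rank F)

theorem exists_norm_integralCoords_le :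
    ∃ c : ℝ, 0 < c ∧ ∀ x : 𝓞 F, ‖integralCoords F x‖ ≤ c * house (x : F) := by
  classical
  obtain ⟨c, hc⟩ : ∃ c : ℝ, ∀ (x : 𝓞 F) (φ : F →+* ℂ),
      ‖(((integralBasis F).reindex (equivReindex F).symm).repr x φ : ℂ)‖ ≤ c * house (x : F) :=
    ⟨_, house.basis_repr_norm_le_const_mul_house F⟩
  have hc1 : 0 < max c 1 := lt_max_of_lt_right one_pos
  refine ⟨max c 1, hc1, fun x =>
    (pi_norm_le_iff_of_nonneg (mul_nonneg hc1.le (house_nonneg _))).2 fun k => ?_⟩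
  have hk := hc x ((equivReindex F).symm k)
  simp only [Basis.repr_reindex_apply, Equiv.symm_symm, Equiv.apply_symm_apply,
    integralBasis_repr_apply, eq_intCast, Rat.cast_intCast, Complex.norm_intCast] at hk
  rw [Int.norm_eq_abs]
  exact hk.trans (by gcongr; exacts [house_nonneg _, le_max_left c 1])

theorem exists_house_le_norm_integralCoords :
    ∃ c : ℝ, 0 < c ∧ ∀ x : 𝓞 F, house (x : F) ≤ c * ‖integralCoords F x‖ := by
  set β := RingOfIntegers.basis F
  refine ⟨∑ k, house (β k : F) + 1,
    add_pos_of_nonneg_of_pos (Finset.sum_nonneg fun k _ => house_nonneg _) one_pos, fun x => ?_⟩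
  have hx : (x : F) = ∑ k, (integralCoords F x k : F) * (β k : F) := by
    conv_lhs => rw [← β.sum_equivFun x]
    push_cast [zsmul_eq_mul]
    rfl
  calc house (x : F) ≤ ∑ k, house ((integralCoords F x k : F) * (β k : F)) := by
        rw [hx]; exact house_sum_le_sum_house _ _
    _ ≤ ∑ k, ‖integralCoords F x‖ * house (β k : F) := by
        gcongr with k
        refine (house_mul_le _ _).trans ?_
        rw [house_intCast, Int.cast_abs, ← Int.norm_eq_abs]
        gcongr
        · exact house_nonneg _
        · exact norm_le_pi_norm _ k
    _ ≤ (∑ k, house (β k : F) + 1) * ‖integralCoords F x‖ := by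
        rw [← Finset.mul_sum]
        nlinarith [norm_nonneg (integralCoords F x)]

theorem exists_div_pow_le_ncard_houseBall :
    ∃ c : ℝ, 0 < c ∧ ∀ r : ℝ, 0 ≤ r → (r / c) ^ finrank ℚ F ≤ (houseBall F r).ncard := by
  classical
  obtain ⟨c, hc, hhouse⟩ := exists_house_le_norm_integralCoords (F := F)
  refine ⟨c, hc, fun r hr => ?_⟩
  set M := ⌊r / c⌋₊
  have hmaps : Set.MapsTo (integralCoords F).symm
      (Fintype.piFinset fun _ : Free.ChooseBasisIndex ℤ (𝓞 F) => Finset.Icc (-(M : ℤ)) M :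
        Set (_ → ℤ)) (houseBall F r) := by
    intro v hv
    have hv : ‖v‖ ≤ M := (pi_norm_le_iff_of_nonneg (Nat.cast_nonneg M)).2 fun k => by
      have hk := Finset.mem_Icc.1 (Fintype.mem_piFinset.1 hv k)
      rw [Int.norm_eq_abs, abs_le]
      exact_mod_cast hk
    calc house _ ≤ c * ‖integralCoords F ((integralCoords F).symm v)‖ := hhouse _
      _ ≤ c * (r / c) := by
          rw [LinearEquiv.apply_symm_apply]
          gcongr
          exact hv.trans (Nat.floor_le (by positivity))
      _ = r := by field_simp
  have hcard := Set.ncard_le_ncard_of_injOn _ hmaps (integralCoords F).symm.injective.injOn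
    (finite_houseBall r)
  rw [Set.ncard_coe_finset, Fintype.card_piFinset, Finset.prod_const, Finset.card_univ,
    Int.card_Icc, card_chooseBasisIndex_eq_finrank,
    show ((M : ℤ) + 1 - -(M : ℤ)).toNat = 2 * M + 1 by omega] at hcard
  calc (r / c) ^ finrank ℚ F ≤ ((2 * M + 1 : ℕ) : ℝ) ^ finrank ℚ F := by
        gcongr
        push_cast
        linarith [Nat.lt_floor_add_one (r / c), (Nat.cast_nonneg M : (0 : ℝ) ≤ M)]
    _ ≤ _ := by exact_mod_cast hcard

theorem tendsto_ncard_houseBall_atTop :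
    Tendsto (fun r : ℝ => ((houseBall F r).ncard : ℝ)) atTop atTop := by
  obtain ⟨c, hc, hball⟩ := exists_div_pow_le_ncard_houseBall (F := F)
  exact tendsto_atTop_mono' atTop ((eventually_ge_atTop 0).mono hball)
    ((tendsto_pow_atTop finrank_pos.ne').comp (tendsto_id.atTop_div_const hc))

theorem exists_ncard_le_of_pairwise_le_house_sub :
    ∃ c : ℝ, 0 < c ∧ ∀ (P : Set (𝓞 F)) (r s : ℝ), 0 ≤ r → 0 < s → P ⊆ houseBall F r →
      P.Pairwise (fun x y => s ≤ house ((x - y : 𝓞 F) : F)) →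
      (P.ncard : ℝ) ≤ (c * r / s + 2) ^ finrank ℚ F := by
  obtain ⟨c₁, hc₁, hnorm⟩ := exists_norm_integralCoords_le (F := F)
  obtain ⟨c₂, hc₂, hhouse⟩ := exists_house_le_norm_integralCoords (F := F)
  refine ⟨2 * c₁ * c₂, by positivity, fun P r s hr hs hPr hP => ?_⟩
  have h := ncard_le_of_norm_le_of_pairwise_le_norm_sub (P := integralCoords F '' P)
    (R := c₁ * r) (s := s / c₂) (by positivity) (by positivity) ?_ ?_
  · rw [Set.ncard_image_of_injective _ (integralCoords F).injective,
      card_chooseBasisIndex_eq_finrank] at h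
    convert h using 3
    field_simp
  · rintro _ ⟨x, hx, rfl⟩
    exact (hnorm x).trans (by gcongr; exact hPr hx)
  · rintro _ ⟨x, hx, rfl⟩ _ ⟨y, hy, rfl⟩ hne
    rw [← map_sub, div_le_iff₀' hc₂]
    exact (hP hx hy fun h => hne (h ▸ rfl)).trans (hhouse _)

theorem natCard_quotient_le_house_pow {b : Ideal (𝓞 F)} {y : 𝓞 F} (hy : y ∈ b) (hy0 : y ≠ 0) :
    (Nat.card (𝓞 F ⧸ b) : ℝ) ≤ house (y : F) ^ finrank ℚ F := by
  have hdvd : Ideal.absNorm b ∣ (Algebra.norm ℤ y).natAbs := by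
    rw [← Ideal.absNorm_span_singleton]
    exact Ideal.absNorm_dvd_absNorm_of_le ((Ideal.span_singleton_le_iff_mem b).2 hy)
  have hle := Nat.le_of_dvd (Int.natAbs_pos.2 (Algebra.norm_ne_zero_iff.2 hy0)) hdvd
  rw [Ideal.absNorm_apply, Submodule.cardQuot_apply] at hle
  obtain ⟨φ⟩ : Nonempty (F →+* ℂ) := inferInstance
  calc (Nat.card (𝓞 F ⧸ b) : ℝ) ≤ (Algebra.norm ℤ y).natAbs := by exact_mod_cast hle
    _ = ‖Algebra.norm ℚ (y : F)‖ := by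
        rw [← Algebra.coe_norm_int, ← Rat.norm_cast_real, Nat.cast_natAbs, Real.norm_eq_abs]
        push_cast; rfl
    _ ≤ ‖φ y‖ * house (y : F) ^ (finrank ℚ F - 1) := norm_norm_le_norm_mul_house_pow _ φ
    _ ≤ house (y : F) * house (y : F) ^ (finrank ℚ F - 1) := by
        gcongr
        exacts [pow_nonneg (house_nonneg _) _, norm_embedding_le_house _ φ]
    _ = house (y : F) ^ finrank ℚ F := by
        rw [← pow_succ', Nat.sub_add_cancel finrank_pos]

theorem exists_ncard_coset_inter_houseBall_sdiff_mul_le :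
    ∃ C : ℝ, ∀ (b : Ideal (𝓞 F)) (t : 𝓞 F) (r : ℝ), house (t : F) ≤ r →
      ((({x | x - t ∈ b} ∩ houseBall F r) \ {t}).ncard : ℝ) * Nat.card (𝓞 F ⧸ b) ≤
        C * (houseBall F r).ncard := by
  obtain ⟨c, hc, hpack⟩ := exists_ncard_le_of_pairwise_le_house_sub (F := F)
  obtain ⟨c', hc', hball⟩ := exists_div_pow_le_ncard_houseBall (F := F)
  set d := finrank ℚ F
  refine ⟨((c + 4) * c') ^ d, fun b t r ht => ?_⟩
  have hr : 0 ≤ r := (house_nonneg _).trans ht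
  set P := ({x | x - t ∈ b} ∩ houseBall F r) \ {t}
  set D := Nat.card (𝓞 F ⧸ b)
  rcases P.eq_empty_or_nonempty with hP | ⟨x₀, ⟨hx₀b, hx₀r⟩, hx₀t⟩
  · rw [hP, Set.ncard_empty, Nat.cast_zero, zero_mul]
    positivity
  rcases Nat.eq_zero_or_pos D with hD | hD
  · rw [hD, Nat.cast_zero, mul_zero]
    positivity
  set s : ℝ := (D : ℝ) ^ (d : ℝ)⁻¹
  have hs : 0 < s := by positivity
  have hsd : s ^ d = D := Real.rpow_inv_natCast_pow (Nat.cast_nonneg D) finrank_pos.ne'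
  have hsep : ∀ y ∈ b, y ≠ 0 → s ≤ house (y : F) := fun y hy hy0 =>
    le_of_pow_le_pow_left₀ finrank_pos.ne' (house_nonneg _)
      (hsd ▸ natCard_quotient_le_house_pow hy hy0)
  have hs2r : s ≤ 2 * r := by
    refine (hsep _ hx₀b (sub_ne_zero.2 hx₀t)).trans ?_
    push_cast
    linarith [house_sub_le (x₀ : F) (t : F), show house (x₀ : F) ≤ r from hx₀r]
  have hcount := hpack P r s hr hs (fun x hx => hx.1.2) fun x hx y hy hxy =>
    hsep (x - y) (by simpa using b.sub_mem hx.1.1 hy.1.1) (sub_ne_zero.2 hxy)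
  calc (P.ncard : ℝ) * D ≤ (c * r / s + 2) ^ d * s ^ d := by rw [hsd]; gcongr
    _ ≤ ((c + 4) * r / s) ^ d * s ^ d := by
        gcongr
        rw [add_mul, add_div]
        gcongr
        rw [le_div_iff₀ hs]
        linarith
    _ = ((c + 4) * c') ^ d * (r / c') ^ d := by
        rw [← mul_pow, ← mul_pow]
        congr 1
        field_simp
    _ ≤ _ := by gcongr; exact hball r hr

end NumberFieldGeometry

section Etale

variable {ι : Type*} [Fintype ι] {F : ι → Type*} [∀ j, Field (F j)] [∀ j, NumberField (F j)]

variable (F) in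
def piHouseBall (r : ℝ) : Set (∀ j, 𝓞 (F j)) := Set.univ.pi fun j => houseBall (F j) r

theorem finite_piHouseBall (r : ℝ) : (piHouseBall F r).Finite :=
  Set.Finite.pi fun _ => finite_houseBall r

theorem ncard_piHouseBall_pos {r : ℝ} (hr : 0 ≤ r) : 0 < (piHouseBall F r).ncard :=
  (Set.ncard_pos (finite_piHouseBall r)).2 ⟨0, fun _ _ => zero_mem_houseBall hr⟩

theorem exists_ncard_coset_inter_piHouseBall_sdiff_mul_le :
    ∃ C : ℝ, ∀ (b : Ideal (∀ j, 𝓞 (F j))) (t : ∀ j, 𝓞 (F j)) (r : ℝ),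
      (∀ j, house (t j : F j) ≤ r) →
      ((({x | x - t ∈ b} ∩ piHouseBall F r) \ {x | ∃ j, x j = t j}).ncard : ℝ) *
        Nat.card ((∀ j, 𝓞 (F j)) ⧸ b) ≤ C * (piHouseBall F r).ncard := by
  choose C hC using fun j => exists_ncard_coset_inter_houseBall_sdiff_mul_le (F := F j)
  refine ⟨∏ j, C j, fun b t r ht => ?_⟩
  obtain ⟨I, rfl⟩ : ∃ I, Ideal.pi I = b := ⟨_, Ideal.piOrderIso.symm_apply_apply b⟩
  set P : ∀ j, Set (𝓞 (F j)) := fun j => ({y | y - t j ∈ I j} ∩ houseBall (F j) r) \ {t j}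
  have hsub : ({x | x - t ∈ Ideal.pi I} ∩ piHouseBall F r) \ {x | ∃ j, x j = t j} ⊆
      Set.univ.pi P := by
    rintro x ⟨⟨hxI, hxB⟩, hxt⟩ j -
    exact ⟨⟨hxI j, hxB j (Set.mem_univ j)⟩, fun h => hxt ⟨j, h⟩⟩
  have hPfin : (Set.univ.pi P).Finite :=
    Set.Finite.pi fun j => (finite_houseBall r).subset fun y hy => hy.1.2
  calc _ ≤ ((Set.univ.pi P).ncard : ℝ) * Nat.card ((∀ j, 𝓞 (F j)) ⧸ Ideal.pi I) := by
        gcongr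
    _ = ∏ j, ((P j).ncard : ℝ) * Nat.card (𝓞 (F j) ⧸ I j) := by
        rw [ncard_univ_pi, natCard_quotient_pi, Finset.prod_mul_distrib]
        push_cast
        rfl
    _ ≤ ∏ j, C j * (houseBall (F j) r).ncard :=
        Finset.prod_le_prod (fun _ _ => by positivity) fun j _ => hC j (I j) (t j) r (ht j)
    _ = (∏ j, C j) * (piHouseBall F r).ncard := by
        rw [piHouseBall, ncard_univ_pi, Finset.prod_mul_distrib]
        push_cast
        rfl

theorem tendsto_ncard_inter_piHouseBall_div (T : Finset (∀ j, 𝓞 (F j))) :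
    Tendsto (fun r : ℝ => (((⋃ t ∈ T, {x | ∃ j, x j = t j}) ∩ piHouseBall F r).ncard : ℝ) /
      (piHouseBall F r).ncard) atTop (𝓝 0) := by
  classical
  have hlim : Tendsto (fun r : ℝ => ∑ _t ∈ T, ∑ j, ((houseBall (F j) r).ncard : ℝ)⁻¹)
      atTop (𝓝 0) := by
    simpa using tendsto_finsetSum T fun _ _ => tendsto_finsetSum Finset.univ fun j _ =>
      (tendsto_ncard_houseBall_atTop (F := F j)).inv_tendsto_atTop
  refine squeeze_zero' (Eventually.of_forall fun r => by positivity)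
    ((eventually_ge_atTop 0).mono fun r hr => ?_) hlim
  have hB : (0 : ℝ) < (piHouseBall F r).ncard := by exact_mod_cast ncard_piHouseBall_pos hr
  have hslice : ∀ (t : ∀ j, 𝓞 (F j)) j, ((piHouseBall F r ∩ {x | x j = t j}).ncard : ℝ) ≤
      ((houseBall (F j) r).ncard : ℝ)⁻¹ * (piHouseBall F r).ncard := fun t j => by
    have hpos : (0 : ℝ) < (houseBall (F j) r).ncard := by
      exact_mod_cast (Set.ncard_pos (finite_houseBall r)).2 ⟨0, zero_mem_houseBall hr⟩
    rw [le_inv_mul_iff₀ hpos, mul_comm]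
    exact_mod_cast ncard_univ_pi_inter_eval_eq_mul_le (fun j => finite_houseBall (F := F j) r)
      j (t j)
  rw [div_le_iff₀ hB, Finset.sum_mul]
  calc (((⋃ t ∈ T, {x | ∃ j, x j = t j}) ∩ piHouseBall F r).ncard : ℝ)
      ≤ ((⋃ t ∈ T, ⋃ j, piHouseBall F r ∩ {x | x j = t j}).ncard : ℝ) := by
        gcongr
        · exact (finite_piHouseBall (F := F) r).subset
            (Set.iUnion₂_subset fun _ _ => Set.iUnion_subset fun _ => Set.inter_subset_left)
        · rintro x ⟨hx, hxB⟩
          simp only [Set.mem_iUnion₂, Set.mem_ofPred_eq] at hx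
          obtain ⟨t, ht, j, hj⟩ := hx
          exact Set.mem_biUnion ht (Set.mem_iUnion.2 ⟨j, hxB, hj⟩)
    _ ≤ ∑ t ∈ T, ∑ j, ((piHouseBall F r ∩ {x | x j = t j}).ncard : ℝ) := by
        refine (Nat.cast_le.2 (T.set_ncard_biUnion_le _)).trans ?_
        push_cast
        gcongr
        exact_mod_cast Set.ncard_iUnion_le_of_fintype _
    _ ≤ _ := by
        gcongr with t _ j
        rw [Finset.sum_mul]
        exact Finset.sum_le_sum fun j _ => hslice t j

end Etale

section UpperDensity

theorem card_inter_div_card_le_one {α : Type*} (I : ℕ → Set α) (A : Set α) (N : ℕ) :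
    (Nat.card ↥(A ∩ I N) : ℝ) / Nat.card ↥(I N) ≤ 1 := by
  rcases (I N).finite_or_infinite with hfin | hinf
  · refine div_le_one_of_le₀ ?_ (Nat.cast_nonneg _)
    exact_mod_cast Nat.card_mono hfin Set.inter_subset_right
  · rw [Nat.card_coe_set_eq (I N), hinf.ncard, Nat.cast_zero, div_zero]
    exact zero_le_one

theorem upperDensity_nonneg {α : Type} (I : ℕ → Set α) (A : Set α) : 0 ≤ upperDensity I A :=
  le_limsup_of_frequently_le (Frequently.of_forall fun _ => by positivity)
    (isBoundedUnder_of ⟨1, card_inter_div_card_le_one I A⟩)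

theorem upperDensity_le_of_tendsto {α : Type} {I : ℕ → Set α} {A : Set α} {u : ℕ → ℝ} {c : ℝ}
    (hu : Tendsto u atTop (𝓝 c))
    (h : ∀ᶠ N in atTop, (Nat.card ↥(A ∩ I N) : ℝ) / Nat.card ↥(I N) ≤ u N) :
    upperDensity I A ≤ c := by
  rw [← hu.limsup_eq]
  exact limsup_le_limsup h (isBoundedUnder_of ⟨0, fun _ => by positivity⟩).isCoboundedUnder_le
    hu.isBoundedUnder_le

end UpperDensity

namespace Sieve

variable (S : Sieve O) (T : Finset O)

theorem normb_pos (i : ℕ) : 0 < S.normb i :=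
  have := S.finQuot i
  Nat.card_pos

theorem cardR_le_card {i : ℕ} (hT : S.RSet i ⊆ T + S.b i) : S.cardR i ≤ T.card := by
  have himage : Ideal.Quotient.mk (S.b i) '' S.RSet i ⊆ Ideal.Quotient.mk (S.b i) '' T := by
    rintro _ ⟨x, hx, rfl⟩
    obtain ⟨t, ht, β, hβ, rfl⟩ := hT hx
    exact ⟨t, ht, by rw [map_add, Ideal.Quotient.eq_zero_iff_mem.2 hβ, add_zero]⟩
  rw [cardR, Nat.card_coe_set_eq, ← Set.ncard_coe_finset]
  exact (Set.ncard_le_ncard himage (T.finite_toSet.image _)).trans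
    (Set.ncard_image_le T.finite_toSet)

theorem isErdos_of_subset_add (hT : ∀ i, S.RSet i ⊆ T + S.b i)
    (hsum : Summable fun i => 1 / (S.normb i : ℝ)) : S.IsErdos := by
  refine (hsum.mul_left (T.card : ℝ)).of_nonneg_of_le (fun _ => by positivity) fun i => ?_
  rw [mul_one_div]
  gcongr
  exact_mod_cast S.cardR_le_card T (hT i)

theorem unionGe_subset_iUnion (hT : ∀ i, S.RSet i ⊆ T + S.b i) (L : ℕ) :
    unionGe S.RSet L ⊆ ⋃ i, ⋃ t ∈ T, {x | x - t ∈ S.b (i + L)} := by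
  intro x hx
  obtain ⟨i, hi, hxi⟩ := Set.mem_iUnion₂.1 hx
  obtain ⟨t, ht, β, hβ, rfl⟩ := hT i hxi
  refine Set.mem_iUnion.2 ⟨i - L, Set.mem_iUnion₂.2 ⟨t, ht, ?_⟩⟩
  simpa [Nat.sub_add_cancel hi] using hβ

theorem ncard_unionGe_inter_sdiff_le (hT : ∀ i, S.RSet i ⊆ T + S.b i)
    (hsum : Summable fun i => 1 / (S.normb i : ℝ)) {B : Set O} (hB : B.Finite)
    (Z : O → Set O) {C : ℝ}
    (hC : ∀ i, ∀ t ∈ T, ((({x | x - t ∈ S.b i} ∩ B) \ Z t).ncard : ℝ) * S.normb i ≤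
      C * B.ncard) (L : ℕ) :
    (((unionGe S.RSet L ∩ B) \ ⋃ t ∈ T, Z t).ncard : ℝ) ≤
      T.card * C * B.ncard * ∑' i, 1 / (S.normb (i + L) : ℝ) := by
  set s : ℕ → Set O := fun i => ⋃ t ∈ T, ({x | x - t ∈ S.b (i + L)} ∩ B) \ Z t
  have hsub : (unionGe S.RSet L ∩ B) \ ⋃ t ∈ T, Z t ⊆ ⋃ i, s i := by
    rintro x ⟨⟨hxU, hxB⟩, hxZ⟩
    obtain ⟨i, hi⟩ := Set.mem_iUnion.1 (S.unionGe_subset_iUnion T hT L hxU)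
    obtain ⟨t, ht, hxt⟩ := Set.mem_iUnion₂.1 hi
    exact Set.mem_iUnion.2 ⟨i, Set.mem_iUnion₂.2
      ⟨t, ht, ⟨hxt, hxB⟩, fun h => hxZ (Set.mem_iUnion₂.2 ⟨t, ht, h⟩)⟩⟩
  have hfin : (⋃ i, s i).Finite :=
    hB.subset (Set.iUnion_subset fun _ => Set.iUnion₂_subset fun _ _ => fun _ hx => hx.1.2)
  have hs : ∀ i, ((s i).ncard : ℝ) ≤ T.card * C * B.ncard * (1 / (S.normb (i + L) : ℝ)) := by
    intro i
    have hpos : (0 : ℝ) < S.normb (i + L) := by exact_mod_cast S.normb_pos (i + L)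
    calc ((s i).ncard : ℝ) ≤ ∑ t ∈ T, ((({x | x - t ∈ S.b (i + L)} ∩ B) \ Z t).ncard : ℝ) := by
          exact_mod_cast T.set_ncard_biUnion_le _
      _ ≤ ∑ _t ∈ T, C * B.ncard / S.normb (i + L) :=
          Finset.sum_le_sum fun t ht => (le_div_iff₀ hpos).2 (hC (i + L) t ht)
      _ = _ := by rw [Finset.sum_const, nsmul_eq_mul]; ring
  rw [← tsum_mul_left]
  exact (Nat.cast_le.2 (Set.ncard_le_ncard hsub hfin)).trans
    (ncard_iUnion_le_tsum hfin (((summable_nat_add_iff L).2 hsum).mul_left _) hs)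

theorem upperDensity_unionGe_le (hT : ∀ i, S.RSet i ⊆ T + S.b i)
    (hsum : Summable fun i => 1 / (S.normb i : ℝ)) {I : ℕ → Set O} (hI : ∀ N, 0 < (I N).ncard)
    (Z : O → Set O)
    (hZ : Tendsto (fun N => (((⋃ t ∈ T, Z t) ∩ I N).ncard : ℝ) / (I N).ncard) atTop (𝓝 0))
    {C : ℝ} (hC : ∀ᶠ N in atTop, ∀ i, ∀ t ∈ T,
      ((({x | x - t ∈ S.b i} ∩ I N) \ Z t).ncard : ℝ) * S.normb i ≤ C * (I N).ncard)
    (L : ℕ) :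
    upperDensity I (unionGe S.RSet L) ≤ T.card * C * ∑' i, 1 / (S.normb (i + L) : ℝ) := by
  set τ := ∑' i, 1 / (S.normb (i + L) : ℝ)
  refine upperDensity_le_of_tendsto (by simpa using hZ.add_const (T.card * C * τ))
    (hC.mono fun N hN => ?_)
  have hpos : (0 : ℝ) < (I N).ncard := by exact_mod_cast hI N
  have hfin := Set.finite_of_ncard_pos (hI N)
  set U := unionGe S.RSet L ∩ I N
  set Z' := ⋃ t ∈ T, Z t
  have hUZ : (U ∩ Z').ncard ≤ (Z' ∩ I N).ncard :=
    Set.ncard_le_ncard (fun x hx => ⟨hx.2, hx.1.2⟩) (hfin.subset Set.inter_subset_right)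
  rw [Nat.card_coe_set_eq, Nat.card_coe_set_eq, div_add' _ _ _ hpos.ne',
    div_le_div_iff_of_pos_right hpos, ← Set.ncard_inter_add_ncard_sdiff_eq_ncard U Z'
      (hfin.subset Set.inter_subset_right)]
  push_cast
  calc _ ≤ ((Z' ∩ I N).ncard : ℝ) + T.card * C * (I N).ncard * τ :=
        add_le_add (by exact_mod_cast hUZ) (S.ncard_unionGe_inter_sdiff_le T hT hsum hfin Z hN L)
    _ = _ := by ring

end Sieve

theorem ball_eq_piHouseBall (N : ℕ) : ball K N = piHouseBall K N := by
  ext x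
  simp only [ball, piHouseBall, houseBall, Set.mem_ofPred_eq, Set.mem_pi, Set.mem_univ,
    true_implies]
  exact forall_congr' fun j => (house_le_iff_forall_norm_le (Nat.cast_nonneg N)).symm

theorem strong_light_tails_of_bounded_reps_etale_general
    {m : ℕ} (K : Fin m → Type) [∀ j, Field (K j)]
    [∀ j, NumberField (K j)]
    (S : Sieve (OK K)) (T : Finset (OK K))
    (hT : ∀ i, S.RSet i ⊆ (↑T : Set (OK K)) + (↑(S.b i) : Set (OK K)))
    (hsum : Summable fun i => 1 / (S.normb i : ℝ)) :
    S.HasStrongLightTails (fun N => ball K N) := by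
  obtain ⟨C, hC⟩ := exists_ncard_coset_inter_piHouseBall_sdiff_mul_le (F := K)
  have hhouse : ∀ᶠ N : ℕ in atTop, ∀ t ∈ T, ∀ j, house (t j : K j) ≤ N :=
    (eventually_all_finset T).2 fun t _ => eventually_all.2 fun j =>
      tendsto_natCast_atTop_atTop.eventually_ge_atTop _
  have hbound : ∀ L, upperDensity (fun N => ball K N) (unionGe S.RSet L) ≤
      T.card * C * ∑' i, 1 / (S.normb (i + L) : ℝ) := by
    simp only [ball_eq_piHouseBall]
    exact S.upperDensity_unionGe_le T hT hsum
      (fun N => ncard_piHouseBall_pos (Nat.cast_nonneg N)) (fun t => {x | ∃ j, x j = t j})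
      ((tendsto_ncard_inter_piHouseBall_div T).comp tendsto_natCast_atTop_atTop)
      (hhouse.mono fun N hN i t ht => hC (S.b i) t N (hN t ht))
  refine ⟨S.isErdos_of_subset_add T hT hsum,
    squeeze_zero (fun L => upperDensity_nonneg _ _) hbound ?_⟩
  simpa using (tendsto_sum_nat_add fun i => 1 / (S.normb i : ℝ)).const_mul ((T.card : ℝ) * C)

/-- **Strong light tails for `B`-free–type sieves over étale `ℚ`-algebras.** If all the sets
`R_i` are contained in `T + b_i` for a single finite set `T` and `∑ 1/N(b_i) < ∞`, then the
sieve is Erdős and has strong light tails for the Følner sequence of balls `B_N`. -/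
theorem strong_light_tails_of_bounded_reps_etale
    {m : ℕ} (hm : 0 < m) (K : Fin m → Type) [∀ j, Field (K j)]
    [∀ j, NumberField (K j)]
    (S : Sieve (OK K)) (T : Finset (OK K))
    (hT : ∀ i, S.RSet i ⊆ (↑T : Set (OK K)) + (↑(S.b i) : Set (OK K)))
    (hsum : Summable fun i => 1 / (S.normb i : ℝ)) :
    S.HasStrongLightTails (fun N => ball K N) :=
  strong_light_tails_of_bounded_reps_etale_general K S T hT hsum

end ErdosSieve
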